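/- arXiv:0908.4244 — 4 statements merged into one kernel-verified Lean document; each statement's English description precedes it below -/
import Mathlib

section
/- Let Λ₀ be a ring, Λ₁ a Λ₀-bimodule, and Λ = T(Λ₀, Λ₁) the tensor ring ⊕_{r≥0} Λ₁^{⊗r} with multiplication given by tensor concatenation. Let Λ₊ = ⊕_{r≥1} Λ₁^{⊗r} be the graded radical. Then for every right Λ-module M there is a short exact sequence of Λ-modules 0 → M ⊗_{Λ₀} Λ₊ → M ⊗_{Λ₀} Λ → M → 0, where the second map is m ⊗ λ ↦ m·λ and the first map sends m ⊗ (μ ⊗ λ) to m ⊗ (μ ⊗ λ) − m·μ ⊗ λ for μ ∈ Λ₁. -/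
open TensorProduct

section Aux

variable (R : Type*) [CommRing R] (V : Type*) [AddCommGroup V] [Module R V]
    (M : Type*) [AddCommGroup M] [Module R M]
    [Module (TensorAlgebra R V) M] [IsScalarTower R (TensorAlgebra R V) M]

local notation "A" => TensorAlgebra R V
local notation "X" => TensorAlgebra R V ⊗[R] (V ⊗[R] M)

/-- generator of the triangular representation -/
noncomputable def trPsi : V →ₗ[R] Module.End R (M × X) where
  toFun v :=
    { toFun := fun p => (TensorAlgebra.ι R v • p.1,
        TensorAlgebra.ι R v • p.2 + (1 : A) ⊗ₜ (v ⊗ₜ p.1))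
      map_add' := fun p q => by
        simp only [Prod.fst_add, Prod.snd_add, smul_add, TensorProduct.tmul_add]
        ext <;> simp <;> abel
      map_smul' := fun r p => by
        simp only [Prod.smul_fst, Prod.smul_snd, RingHom.id_apply]
        ext
        · simp [smul_comm r]
        · simp [smul_comm r, tmul_smul, smul_add] }
  map_add' v w := by
    ext p <;>
      simp [add_smul, TensorProduct.add_tmul, TensorProduct.tmul_add] <;> abel
  map_smul' r v := by
    ext p <;> simp [smul_comm r, tmul_smul, smul_assoc, TensorProduct.smul_tmul] <;> abel

noncomputable def trPhi : TensorAlgebra R V →ₐ[R] Module.End R (M × X) :=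
  TensorAlgebra.lift R (trPsi R V M)

theorem trPhi_fst (a : A) (p : M × X) : (trPhi R V M a p).1 = a • p.1 := by
  induction a using TensorAlgebra.induction generalizing p with
  | algebraMap r =>
      simp [trPhi, algebraMap_smul, Module.algebraMap_end_apply]
  | ι v => simp [trPhi, trPsi]
  | mul a b ha hb => simp [map_mul, Module.End.mul_apply, ha, hb, mul_smul]
  | add a b ha hb => simp [map_add, ha, hb, add_smul]

theorem trPhi_snd (a : A) (m : M) (x : X) :
    (trPhi R V M a (m, x)).2 = a • x + (trPhi R V M a (m, 0)).2 := by
  induction a using TensorAlgebra.induction generalizing m x with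
  | algebraMap r =>
      simp [algebraMap_smul, Module.algebraMap_end_apply]
  | ι v => simp [trPhi, trPsi]
  | mul a b ha hb =>
      have eb : ∀ (m : M) (x : A ⊗[R] (V ⊗[R] M)), trPhi R V M b (m, x) =
          (b • m, b • x + (trPhi R V M b (m, 0)).2) :=
        fun m x => Prod.ext (trPhi_fst R V M b (m, x)) (hb m x)
      rw [map_mul, Module.End.mul_apply, Module.End.mul_apply, eb m x, ha]
      conv_rhs => rw [show trPhi R V M b ((m, 0) : M × (A ⊗[R] (V ⊗[R] M))) =
        (b • m, (trPhi R V M b (m, 0)).2) from Prod.ext (trPhi_fst R V M b (m, 0)) rfl]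
      rw [ha ((b : A) • m) ((trPhi R V M b (m, 0)).2)]
      simp only [smul_add, mul_smul]
      abel
  | add a b ha hb =>
      simp only [map_add, LinearMap.add_apply, Prod.snd_add]
      rw [ha, hb, add_smul]
      abel

noncomputable def trH : TensorAlgebra R V →ₗ[R] M →ₗ[R] X where
  toFun a := (LinearMap.snd R M X).comp ((trPhi R V M a).comp (LinearMap.inl R M X))
  map_add' a b := by ext m; simp [map_add]
  map_smul' r a := by ext m; simp [map_smul]

noncomputable def trh : (TensorAlgebra R V ⊗[R] M) →ₗ[R] X :=
  TensorProduct.lift (trH R V M)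

theorem trh_tmul (a : A) (m : M) : trh R V M (a ⊗ₜ m) = (trPhi R V M a (m, 0)).2 := by
  rw [trh, TensorProduct.lift.tmul]
  rfl

theorem trh_one (m : M) : trh R V M ((1 : A) ⊗ₜ m) = 0 := by
  rw [trh_tmul, map_one]
  rfl

theorem trh_algebraMap (r : R) (m : M) :
    trh R V M ((algebraMap R (TensorAlgebra R V) r) ⊗ₜ m) = 0 := by
  rw [trh_tmul]
  simp [Module.algebraMap_end_apply]

theorem trh_mul_ι (l : A) (v : V) (m : M) :
    trh R V M ((l * TensorAlgebra.ι R v) ⊗ₜ m) =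
      l • ((1 : A) ⊗ₜ (v ⊗ₜ m)) + trh R V M (l ⊗ₜ (TensorAlgebra.ι R v • m)) := by
  rw [trh_tmul, trh_tmul]
  simp only [map_mul, Module.End.mul_apply]
  have : trPhi R V M (TensorAlgebra.ι R v) ((m, 0) : M × X) =
      (TensorAlgebra.ι R v • m, (1 : A) ⊗ₜ (v ⊗ₜ m)) := by
    simp [trPhi, trPsi]
  rw [this, trPhi_snd R V M l (TensorAlgebra.ι R v • m) ((1 : A) ⊗ₜ (v ⊗ₜ m))]

theorem trh_ι (v : V) (m : M) :
    trh R V M ((TensorAlgebra.ι R v) ⊗ₜ m) = (1 : A) ⊗ₜ (v ⊗ₜ m) := by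
  have := trh_mul_ι R V M 1 v m
  rw [one_mul, trh_one, add_zero, one_smul] at this
  exact this

theorem trh_mul (a b : A) (m : M) :
    trh R V M ((a * b) ⊗ₜ m) = a • trh R V M (b ⊗ₜ m) + trh R V M (a ⊗ₜ (b • m)) := by
  rw [trh_tmul, trh_tmul, trh_tmul, map_mul, Module.End.mul_apply]
  conv_lhs => rw [show trPhi R V M b ((m, 0) : M × X) = (b • m, (trPhi R V M b (m, 0)).2) from
    Prod.ext (trPhi_fst R V M b (m, 0)) rfl]
  rw [trPhi_snd]

end Aux

/-- Let `Λ = T(Λ₀, Λ₁)` be the tensor ring on a `Λ₀`-module `Λ₁` and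
`Λ₊ = ⊕_{r ≥ 1} Λ₁^{⊗r}` its graded radical, so that `Λ₊ ≅ Λ ⊗ Λ₁` (here, working with left
modules, `Λ₊ ⊗_{Λ₀} M` is realized as `Λ ⊗_{Λ₀} (Λ₁ ⊗_{Λ₀} M)`).  For every `Λ`-module `M`
there is a short exact sequence of `Λ`-modules
`0 → Λ₊ ⊗_{Λ₀} M → Λ ⊗_{Λ₀} M → M → 0`,
where `ε (λ ⊗ m) = λ • m` and `δ (λ ⊗ (μ ⊗ m)) = (λμ) ⊗ m − λ ⊗ (μ • m)` for `μ ∈ Λ₁`. -/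
theorem tensorRing_standard_resolution
    (R : Type*) [CommRing R] (V : Type*) [AddCommGroup V] [Module R V]
    (M : Type*) [AddCommGroup M] [Module R M]
    [Module (TensorAlgebra R V) M] [IsScalarTower R (TensorAlgebra R V) M]
    (ε : TensorAlgebra R V ⊗[R] M →ₗ[R] M)
    (hε : ∀ (l : TensorAlgebra R V) (m : M), ε (l ⊗ₜ m) = l • m)
    (δ : TensorAlgebra R V ⊗[R] (V ⊗[R] M) →ₗ[R] TensorAlgebra R V ⊗[R] M)
    (hδ : ∀ (l : TensorAlgebra R V) (v : V) (m : M),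
      δ (l ⊗ₜ (v ⊗ₜ m)) = (l * TensorAlgebra.ι R v) ⊗ₜ m - l ⊗ₜ ((TensorAlgebra.ι R v) • m)) :
    Function.Injective δ ∧ Function.Exact δ ε ∧ Function.Surjective ε := by
  -- δ commutes with the A-action
  have δ_smul : ∀ (a : TensorAlgebra R V) (y : TensorAlgebra R V ⊗[R] (V ⊗[R] M)),
      δ (a • y) = a • δ y := by
    intro a y
    induction y using TensorProduct.induction_on with
    | zero => simp
    | tmul l z =>
        induction z using TensorProduct.induction_on with
        | zero => simp
        | tmul v m =>
            rw [TensorProduct.smul_tmul', hδ, smul_eq_mul, hδ, smul_sub,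
              TensorProduct.smul_tmul', TensorProduct.smul_tmul', smul_eq_mul, smul_eq_mul,
              mul_assoc]
        | add z₁ z₂ h₁ h₂ =>
            rw [TensorProduct.tmul_add, smul_add, map_add, h₁, h₂, map_add, smul_add]
    | add y₁ y₂ h₁ h₂ => rw [smul_add, map_add, h₁, h₂, map_add, smul_add]
  -- h ∘ δ = id
  have hδ_id : ∀ y, trh R V M (δ y) = y := by
    intro y
    induction y using TensorProduct.induction_on with
    | zero => simp
    | tmul l z =>
        induction z using TensorProduct.induction_on with
        | zero => simp
        | tmul v m =>
            rw [hδ, map_sub, trh_mul_ι, add_sub_cancel_right,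
              TensorProduct.smul_tmul', smul_eq_mul, mul_one]
        | add z₁ z₂ h₁ h₂ =>
            rw [TensorProduct.tmul_add, map_add, map_add, h₁, h₂]
    | add y₁ y₂ h₁ h₂ => rw [map_add, map_add, h₁, h₂]
  -- δ ∘ h = id - 1 ⊗ ε on pure tensors
  have key : ∀ (l : TensorAlgebra R V) (m : M),
      δ (trh R V M (l ⊗ₜ m)) = l ⊗ₜ m - (1 : TensorAlgebra R V) ⊗ₜ (l • m) := by
    intro l
    induction l using TensorAlgebra.induction with
    | algebraMap r =>
        intro m
        rw [trh_algebraMap, map_zero, eq_comm, sub_eq_zero, algebraMap_smul, tmul_smul,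
          TensorProduct.smul_tmul', Algebra.algebraMap_eq_smul_one]
    | ι v =>
        intro m
        rw [trh_ι, hδ, one_mul]
    | mul a b ha hb =>
        intro m
        rw [trh_mul, map_add, δ_smul, hb, ha, smul_sub, TensorProduct.smul_tmul',
          TensorProduct.smul_tmul', smul_eq_mul, smul_eq_mul, mul_one, mul_smul]
        abel
    | add a b ha hb =>
        intro m
        rw [TensorProduct.add_tmul, map_add, map_add, ha, hb, add_smul, TensorProduct.tmul_add]
        abel
  have key2 : ∀ x, δ (trh R V M x) = x - (1 : TensorAlgebra R V) ⊗ₜ ε x := by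
    intro x
    induction x using TensorProduct.induction_on with
    | zero => simp
    | tmul l m => rw [key, hε]
    | add x y hx hy =>
        rw [map_add, map_add, hx, hy, map_add, TensorProduct.tmul_add]
        abel
  have εδ : ∀ y, ε (δ y) = 0 := by
    intro y
    induction y using TensorProduct.induction_on with
    | zero => simp
    | tmul l z =>
        induction z using TensorProduct.induction_on with
        | zero => simp
        | tmul v m => rw [hδ, map_sub, hε, hε, mul_smul, sub_self]
        | add z₁ z₂ h₁ h₂ => rw [TensorProduct.tmul_add, map_add, map_add, h₁, h₂, add_zero]
    | add y₁ y₂ h₁ h₂ => rw [map_add, map_add, h₁, h₂, add_zero]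
  refine ⟨?_, ?_, ?_⟩
  · intro y z hyz
    have := congrArg (trh R V M) hyz
    rwa [hδ_id, hδ_id] at this
  · intro x
    constructor
    · intro hx
      exact ⟨trh R V M x, by rw [key2, hx, TensorProduct.tmul_zero, sub_zero]⟩
    · rintro ⟨y, rfl⟩
      exact εδ y
  · intro m
    exact ⟨(1 : TensorAlgebra R V) ⊗ₜ m, by rw [hε, one_smul]⟩
end

section
/- For each Λ-submodule U of M and each f ∈ Hom_Λ(U, M/U), the set S_f = { u + vε : u ∈ U, v ∈ M, π(v) = f(u) } ⊆ M ⊗_k k[ε]/(ε²) is a Λ ⊗_k k[ε]/(ε²)-submodule of M ⊗_k k[ε]/(ε²), and as a k[ε]/(ε²)-module it is a direct summand of M ⊗_k k[ε]/(ε²), free of rank dim_k U. -/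
open TensorProduct DualNumber

noncomputable section

variable (k : Type*) [Field k] (M : Type*) [AddCommGroup M] [Module k M]

/-- The evaluation-at-`ε = 0` map `M ⊗_k k[ε] → M` (with the dual numbers written as the left
tensor factor). -/
def epsZero : DualNumber k ⊗[k] M →ₗ[k] M :=
  (TensorProduct.lid k M).toLinearMap.comp
    (TensorProduct.map (TrivSqZeroExt.fstHom k k k).toLinearMap LinearMap.id)

section Aux

variable {k M}

/-- Decomposition of a pure tensor over the dual numbers. -/
theorem tmul_decompose (c : DualNumber k) (m : M) :
    (c ⊗ₜ[k] m : DualNumber k ⊗[k] M)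
      = (1 : DualNumber k) ⊗ₜ[k] (c.fst • m) + (ε : DualNumber k) ⊗ₜ[k] (c.snd • m) := by
  conv_lhs => rw [← TrivSqZeroExt.inl_fst_add_inr_snd_eq c]
  rw [TensorProduct.add_tmul]
  congr 1
  · rw [← TensorProduct.smul_tmul, ← TrivSqZeroExt.algebraMap_eq_inl,
      Algebra.algebraMap_eq_smul_one]
  · rw [← TensorProduct.smul_tmul, DualNumber.inr_eq_smul_eps]

/-- Every element of `k[ε] ⊗ M` has the form `1 ⊗ m + ε ⊗ m'`. -/
theorem exists_one_eps_form (z : DualNumber k ⊗[k] M) :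
    ∃ m m' : M, z = (1 : DualNumber k) ⊗ₜ[k] m + (ε : DualNumber k) ⊗ₜ[k] m' := by
  induction z using TensorProduct.induction_on with
  | zero => exact ⟨0, 0, by simp⟩
  | tmul c m => exact ⟨c.fst • m, c.snd • m, tmul_decompose c m⟩
  | add x y hx hy =>
    obtain ⟨m1, m1', rfl⟩ := hx
    obtain ⟨m2, m2', rfl⟩ := hy
    exact ⟨m1 + m2, m1' + m2', by rw [TensorProduct.tmul_add, TensorProduct.tmul_add]; abel⟩

end Aux

variable (Λ : Type*) [Ring Λ] [Algebra k Λ]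
variable [Module Λ M] [IsScalarTower k Λ M] [SMulCommClass Λ k M]
variable (U : Submodule Λ M)

/-- The subset `S_f = { u + vε : u ∈ U, π v = f u }` of `M ⊗_k k[ε]`, where
`π : M → M/U` is the projection and `u + vε` is encoded as `1 ⊗ u + ε ⊗ v`. -/
def Sset (f : U →ₗ[Λ] M ⧸ U) : Set (DualNumber k ⊗[k] M) :=
  {x | ∃ (u : U) (v : M), Submodule.Quotient.mk v = f u ∧
        x = (1 : DualNumber k) ⊗ₜ[k] (u : M) + (ε : DualNumber k) ⊗ₜ[k] v}

local notation "A" => DualNumber k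

set_option maxHeartbeats 2000000 in
/-- For a `Λ`-submodule `U ⊆ M` and `f ∈ Hom_Λ(U, M/U)`, the set
`S_f = { u + vε : u ∈ U, π v = f u } ⊆ M ⊗_k k[ε]` is a `Λ ⊗_k k[ε]`-submodule of
`M ⊗_k k[ε]` (a `k[ε]`-submodule closed under the action of every `a ∈ Λ`), and as a
`k[ε]`-module it is a direct summand of `M ⊗_k k[ε]`, free of rank `dim_k U`. -/
theorem Sf_is_free_summand_submodule [FiniteDimensional k M] (f : U →ₗ[Λ] M ⧸ U) :
    ∃ S : Submodule (DualNumber k) (DualNumber k ⊗[k] M),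
      (S : Set (DualNumber k ⊗[k] M)) = Sset k M Λ U f ∧
      (∀ a : Λ, ∀ x ∈ S,
        LinearMap.lTensor (DualNumber k) (DistribMulAction.toLinearMap k M a) x ∈ S) ∧
      (∃ S' : Submodule (DualNumber k) (DualNumber k ⊗[k] M), IsCompl S S') ∧
      Module.Free (DualNumber k) S ∧
      Module.finrank (DualNumber k) S = Module.finrank k U := by
  classical
  haveI : FiniteDimensional k U :=
    FiniteDimensional.of_injective (U.subtype.restrictScalars k) Subtype.coe_injective
  -- the k-linear data
  let fk : U →ₗ[k] M ⧸ U := f.restrictScalars k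
  let Uk : Submodule k M := U.restrictScalars k
  obtain ⟨W, hW⟩ := Submodule.exists_isCompl Uk
  let p : M →ₗ[k] U := Uk.linearProjOfIsCompl W hW
  let πk : M →ₗ[k] M ⧸ U := (U.mkQ).restrictScalars k
  have hsurj : LinearMap.range πk = ⊤ := LinearMap.range_eq_top.2 (Submodule.mkQ_surjective U)
  obtain ⟨σ, hσ⟩ := πk.exists_rightInverse_of_surjective hsurj
  let ι : U →ₗ[k] M := U.subtype.restrictScalars k
  let ιW : W →ₗ[k] M := W.subtype
  let ft : M →ₗ[k] M := σ ∘ₗ fk ∘ₗ p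
  have hpι : p ∘ₗ ι = LinearMap.id := by
    ext u
    exact congrArg Subtype.val (Submodule.linearProjOfIsCompl_apply_left hW u)
  have hpιW : p ∘ₗ ιW = 0 := by
    ext w
    exact congrArg Subtype.val (Submodule.linearProjOfIsCompl_apply_right hW w)
  have hπft : ∀ u : U, Submodule.Quotient.mk (ft (u : M)) = f u := by
    intro u
    have h1 : p (u : M) = u := Submodule.linearProjOfIsCompl_apply_left hW u
    show πk (σ (fk (p (u : M)))) = f u
    rw [h1]
    exact (DFunLike.congr_fun hσ (fk u) : _)
  -- base-changed maps
  let b : A ⊗[k] U →ₗ[A] A ⊗[k] M := ι.baseChange A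
  let w : A ⊗[k] W →ₗ[A] A ⊗[k] M := ιW.baseChange A
  let D : A ⊗[k] M →ₗ[A] A ⊗[k] M := (ε : A) • ft.baseChange A
  have hD : ∀ x, D (D x) = 0 := by
    intro x
    show (ε : A) • (ft.baseChange A) ((ε : A) • (ft.baseChange A) x) = 0
    rw [map_smul, smul_smul, DualNumber.eps_mul_eps, zero_smul]
  -- the unipotent automorphism T = 1 + D
  let T : (A ⊗[k] M) ≃ₗ[A] (A ⊗[k] M) :=
    LinearEquiv.ofLinear (LinearMap.id + D) (LinearMap.id - D)
      (by
        refine LinearMap.ext fun x => ?_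
        simp only [LinearMap.comp_apply, LinearMap.sub_apply, LinearMap.add_apply,
          LinearMap.id_apply, map_sub, hD x, sub_zero]
        abel)
      (by
        refine LinearMap.ext fun x => ?_
        simp only [LinearMap.comp_apply, LinearMap.sub_apply, LinearMap.add_apply,
          LinearMap.id_apply, map_add, hD x, add_zero]
        abel)
  have hT_apply : ∀ x, T x = x + D x := fun x => by
    simp only [T, LinearEquiv.ofLinear_apply, LinearMap.add_apply, LinearMap.id_apply]
  have hDone : ∀ m : M, D ((1 : A) ⊗ₜ[k] m) = (ε : A) ⊗ₜ[k] ft m := by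
    intro m
    show (ε : A) • (ft.baseChange A) ((1 : A) ⊗ₜ[k] m) = _
    rw [LinearMap.baseChange_tmul, TensorProduct.smul_tmul', smul_eq_mul, mul_one]
  have hDeps : ∀ m : M, D ((ε : A) ⊗ₜ[k] m) = 0 := by
    intro m
    show (ε : A) • (ft.baseChange A) ((ε : A) ⊗ₜ[k] m) = _
    rw [LinearMap.baseChange_tmul, TensorProduct.smul_tmul', smul_eq_mul,
      DualNumber.eps_mul_eps, TensorProduct.zero_tmul]
  -- the key computation
  have hTb : ∀ u u' : U, T (b ((1 : A) ⊗ₜ[k] u + (ε : A) ⊗ₜ[k] u'))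
      = (1 : A) ⊗ₜ[k] (u : M) + (ε : A) ⊗ₜ[k] ((u' : M) + ft (u : M)) := by
    intro u u'
    have hb : b ((1 : A) ⊗ₜ[k] u + (ε : A) ⊗ₜ[k] u')
        = (1 : A) ⊗ₜ[k] (u : M) + (ε : A) ⊗ₜ[k] (u' : M) := by
      rw [map_add, LinearMap.baseChange_tmul, LinearMap.baseChange_tmul]; rfl
    rw [hb, hT_apply, map_add, hDone, hDeps, TensorProduct.tmul_add]
    abel
  -- the submodule S
  let N : Submodule A (A ⊗[k] M) := LinearMap.range b
  let S : Submodule A (A ⊗[k] M) := N.map (T : (A ⊗[k] M) →ₗ[A] (A ⊗[k] M))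
  have hbform : ∀ z : A ⊗[k] U, ∃ u u' : U,
      b z = (1 : A) ⊗ₜ[k] (u : M) + (ε : A) ⊗ₜ[k] (u' : M) ∧
      z = (1 : A) ⊗ₜ[k] u + (ε : A) ⊗ₜ[k] u' := by
    intro z
    obtain ⟨u, u', rfl⟩ := exists_one_eps_form z
    refine ⟨u, u', ?_, rfl⟩
    rw [map_add, LinearMap.baseChange_tmul, LinearMap.baseChange_tmul]; rfl
  -- set equality
  have hset : (S : Set (A ⊗[k] M)) = Sset k M Λ U f := by
    ext x
    constructor
    · rintro ⟨y, ⟨z, rfl⟩, rfl⟩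
      obtain ⟨u, u', hbz, rfl⟩ := hbform z
      refine ⟨u, (u' : M) + ft (u : M), ?_, hTb u u'⟩
      have hmu' : Submodule.Quotient.mk (p := U) (u' : M) = 0 :=
        (Submodule.Quotient.mk_eq_zero U).2 u'.2
      rw [Submodule.Quotient.mk_add, hmu', hπft u, zero_add]
    · rintro ⟨u, v, hv, rfl⟩
      have hmem : v - ft (u : M) ∈ U := by
        rw [← Submodule.Quotient.mk_eq_zero U, Submodule.Quotient.mk_sub, hv, hπft u, sub_self]
      refine ⟨b ((1 : A) ⊗ₜ[k] u + (ε : A) ⊗ₜ[k] (⟨v - ft (u : M), hmem⟩ : U)),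
        ⟨_, rfl⟩, ?_⟩
      simp only [LinearEquiv.coe_coe]
      rw [hTb]
      congr 1
      congr 1
      show v - ft (u : M) + ft (u : M) = v
      abel
  -- Λ-stability
  have hstab : ∀ a : Λ, ∀ x ∈ S,
      LinearMap.lTensor A (DistribMulAction.toLinearMap k M a) x ∈ S := by
    intro a x hx
    have hx' : x ∈ Sset k M Λ U f := hset ▸ hx
    obtain ⟨u, v, hv, rfl⟩ := hx'
    have : LinearMap.lTensor A (DistribMulAction.toLinearMap k M a)
        ((1 : A) ⊗ₜ[k] (u : M) + (ε : A) ⊗ₜ[k] v)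
        = (1 : A) ⊗ₜ[k] ((a • u : U) : M) + (ε : A) ⊗ₜ[k] (a • v) := by
      rw [map_add, LinearMap.lTensor_tmul, LinearMap.lTensor_tmul]; rfl
    rw [this]
    have hmemS : (1 : A) ⊗ₜ[k] ((a • u : U) : M) + (ε : A) ⊗ₜ[k] (a • v) ∈ Sset k M Λ U f := by
      refine ⟨a • u, a • v, ?_, rfl⟩
      have : Submodule.Quotient.mk (p := U) (a • v) = a • Submodule.Quotient.mk (p := U) v :=
        (U.mkQ).map_smul a v
      rw [this, hv, ← f.map_smul]
    show _ ∈ (S : Set (A ⊗[k] M))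
    rw [hset]
    exact hmemS
  -- complement
  let P : (A ⊗[k] M) →ₗ[A] (A ⊗[k] M) := (ι ∘ₗ p).baseChange A
  have hPb : P ∘ₗ b = b := by
    show ((ι ∘ₗ p).baseChange A) ∘ₗ ι.baseChange A = ι.baseChange A
    rw [← LinearMap.baseChange_comp, LinearMap.comp_assoc, hpι, LinearMap.comp_id]
  have hPw : P ∘ₗ w = 0 := by
    show ((ι ∘ₗ p).baseChange A) ∘ₗ ιW.baseChange A = 0
    rw [← LinearMap.baseChange_comp, LinearMap.comp_assoc, hpιW, LinearMap.comp_zero]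
    ext z
    simp
  have hNcompl : IsCompl N (LinearMap.range w) := by
    constructor
    · rw [disjoint_iff]
      rw [Submodule.eq_bot_iff]
      rintro x ⟨⟨y, rfl⟩, ⟨z, hz⟩⟩
      have h1 : P (b y) = b y := DFunLike.congr_fun hPb y
      have h2 : P (b y) = 0 := by
        rw [← hz]; exact DFunLike.congr_fun hPw z
      rw [← h1, h2]
    · rw [codisjoint_iff, eq_top_iff]
      rintro x -
      induction x using TensorProduct.induction_on with
      | zero => exact Submodule.zero_mem _
      | tmul c m =>
        obtain ⟨y, hy, z, hz, rfl⟩ :=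
          Submodule.mem_sup.1 (hW.codisjoint.eq_top ▸ Submodule.mem_top (x := m) :
            m ∈ Uk ⊔ W)
        rw [TensorProduct.tmul_add]
        refine Submodule.add_mem _ (Submodule.mem_sup_left ⟨c ⊗ₜ[k] (⟨y, hy⟩ : U), ?_⟩)
          (Submodule.mem_sup_right ⟨c ⊗ₜ[k] (⟨z, hz⟩ : W), ?_⟩)
        · rw [LinearMap.baseChange_tmul]; rfl
        · rw [LinearMap.baseChange_tmul]; rfl
      | add x y hx hy => exact Submodule.add_mem _ hx hy
  have hScompl : IsCompl S ((LinearMap.range w).map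
      (T : (A ⊗[k] M) →ₗ[A] (A ⊗[k] M))) := by
    have := (Submodule.orderIsoMapComap T).isCompl hNcompl
    simpa using this
  -- freeness and rank
  have hbinj : Function.Injective b := by
    have hleft : (p.baseChange A) ∘ₗ b = LinearMap.id := by
      show (p.baseChange A) ∘ₗ ι.baseChange A = LinearMap.id
      rw [← LinearMap.baseChange_comp, hpι, LinearMap.baseChange_id]
    intro x y hxy
    have := congrArg (p.baseChange A) hxy
    have hx := DFunLike.congr_fun hleft x
    have hy := DFunLike.congr_fun hleft y
    simp only [LinearMap.comp_apply, LinearMap.id_apply] at hx hy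
    rw [hx, hy] at this
    exact this
  let e : (A ⊗[k] U) ≃ₗ[A] S :=
    (LinearEquiv.ofInjective b hbinj).trans (T.submoduleMap N)
  refine ⟨S, hset, hstab, ⟨_, hScompl⟩, Module.Free.of_equiv e, ?_⟩
  rw [← LinearEquiv.finrank_eq e, Module.finrank_baseChange]
end
end

section
/- Let ν ≥ 0, and let 𝐞 = (e⁰, …, e^ν) and 𝐫 = (r⁰, …, r^ν) be sequences of non-negative integers such that 𝐞 + ⃖𝐫 is weakly increasing (where (⃖𝐫)^i = r^{ν−i}). Let X^{𝐫,𝐞} be the representation of the quiver A_{ν+1} = (0 → 1 → ⋯ → ν) with X^i = k^{e^{ν−i} + r^i} and all maps surjective. Then X^{𝐫,𝐞} has a subrepresentation of dimension vector 𝐫 if and only if 𝐞 is weakly increasing (e⁰ ≥ 0 and e^i ≤ e^{i+1} for all i). -/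
open Module

private lemma aux_exists_le_finrank {k V : Type*} [Field k] [AddCommGroup V] [Module k V]
    [FiniteDimensional k V] (W : Submodule k V) (n : ℕ) (hn : n ≤ finrank k W) :
    ∃ V' : Submodule k V, V' ≤ W ∧ finrank k V' = n := by
  have b := finBasis k W
  set v : Fin n → V := fun j => (b (Fin.castLE hn j) : V) with hv
  have hli : LinearIndependent k v :=
    (b.linearIndependent.comp (Fin.castLE hn) (Fin.castLE_injective hn)).map'
      W.subtype W.ker_subtype
  refine ⟨Submodule.span k (Set.range v), ?_, ?_⟩
  · rw [Submodule.span_le]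
    rintro x ⟨j, rfl⟩
    exact (b (Fin.castLE hn j)).2
  · rw [finrank_span_eq_card hli, Fintype.card_fin]

private lemma aux_finrank_comap {k V W : Type*} [Field k] [AddCommGroup V] [Module k V]
    [FiniteDimensional k V] [AddCommGroup W] [Module k W] [FiniteDimensional k W]
    (f : V →ₗ[k] W) (hf : Function.Surjective f) (U : Submodule k W) :
    finrank k (U.comap f) = finrank k U + finrank k (LinearMap.ker f) := by
  have hle : ∀ x : V, x ∈ U.comap f → f x ∈ U := fun x hx => hx
  set f' := f.restrict hle with hf'
  have hsurj' : Function.Surjective f' := by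
    rintro ⟨w, hw⟩
    obtain ⟨x, rfl⟩ := hf w
    exact ⟨⟨x, hw⟩, rfl⟩
  have h1 := LinearMap.finrank_range_add_finrank_ker f'
  rw [LinearMap.range_eq_top.mpr hsurj', finrank_top] at h1
  have hker : LinearMap.ker f' = (LinearMap.ker f).comap (U.comap f).subtype :=
    LinearMap.ker_restrict hle
  have hkle : LinearMap.ker f ≤ U.comap f := fun x hx => by
    simp [Submodule.mem_comap, LinearMap.mem_ker.mp hx, U.zero_mem]
  have h2 : finrank k (LinearMap.ker f') = finrank k (LinearMap.ker f) := by
    rw [hker]; exact (Submodule.comapSubtypeEquivOfLe hkle).finrank_eq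
  omega

/-- Let `𝐞 = (e⁰, …, e^ν)` and `𝐫 = (r⁰, …, r^ν)` be sequences of
non-negative integers such that `𝐞 + ⃖𝐫` is weakly increasing.  Let `X^{𝐫,𝐞}` be the
representation of the quiver `A_{ν+1} = (0 → 1 → ⋯ → ν)` with `X^i = k^{e^{ν−i} + r^i}` and all
maps surjective.  Then `X^{𝐫,𝐞}` has a subrepresentation of dimension vector `𝐫` if and only if
`𝐞` is weakly increasing. -/
theorem subrep_of_injective_Arep_exists_iff
    (k : Type*) [Field k] (ν : ℕ) (e r : ℕ → ℕ)
    (hincr : ∀ i < ν, e i + r (ν - i) ≤ e (i + 1) + r (ν - (i + 1)))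
    (X : Fin (ν + 1) → Type*) [∀ i, AddCommGroup (X i)] [∀ i, Module k (X i)]
    [∀ i, FiniteDimensional k (X i)]
    (hdim : ∀ i : Fin (ν + 1), finrank k (X i) = e (ν - i.val) + r i.val)
    (g : ∀ i : Fin ν, X i.castSucc →ₗ[k] X i.succ)
    (hsurj : ∀ i, Function.Surjective (g i)) :
    (∃ U : ∀ i : Fin (ν + 1), Submodule k (X i),
        (∀ i : Fin ν, ∀ x ∈ U i.castSucc, g i x ∈ U i.succ) ∧
        (∀ i : Fin (ν + 1), finrank k (U i) = r i.val)) ↔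
      (∀ i < ν, e i ≤ e (i + 1)) := by
  constructor
  · rintro ⟨U, hmap, hrank⟩ j hj
    set i : Fin ν := ⟨ν - 1 - j, by omega⟩ with hi
    have hiv : i.val = ν - 1 - j := rfl
    set f : X i.castSucc →ₗ[k] (X i.succ ⧸ U i.succ) := (U i.succ).mkQ ∘ₗ g i with hf
    have hsf : Function.Surjective f := (U i.succ).mkQ_surjective.comp (hsurj i)
    have h1 := LinearMap.finrank_range_add_finrank_ker f
    rw [LinearMap.range_eq_top.mpr hsf, finrank_top] at h1
    have hq := Submodule.finrank_quotient_add_finrank (U i.succ)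
    have hkle : U i.castSucc ≤ LinearMap.ker f := fun x hx => by
      simp only [hf, LinearMap.mem_ker, LinearMap.comp_apply, Submodule.mkQ_apply,
        Submodule.Quotient.mk_eq_zero]
      exact hmap i x hx
    have hk : r i.val ≤ finrank k (LinearMap.ker f) := by
      have h0 := hrank i.castSucc
      rw [Fin.coe_castSucc] at h0
      rw [← h0]
      exact Submodule.finrank_mono hkle
    have hd1 := hdim i.castSucc
    have hd2 := hdim i.succ
    have hr2 := hrank i.succ
    simp only [Fin.coe_castSucc, Fin.val_succ] at hd1 hd2 hr2 hk
    have e1 : ν - i.val = j + 1 := by omega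
    have e2 : ν - (i.val + 1) = j := by omega
    rw [e1] at hd1
    rw [e2] at hd2
    omega
  · intro he
    -- backward: construct U by reverse recursion
    have hlast : ∃ V : Submodule k (X (Fin.last ν)), V ≤ ⊤ ∧ finrank k V = r ν := by
      apply aux_exists_le_finrank
      rw [finrank_top, hdim]
      simp
    have hex : ∀ (i : Fin ν) (W : Submodule k (X i.succ)), finrank k W = r (i.val + 1) →
        ∃ V : Submodule k (X i.castSucc), V ≤ W.comap (g i) ∧ finrank k V = r i.val := by
      intro i W hW
      apply aux_exists_le_finrank
      rw [aux_finrank_comap (g i) (hsurj i) W, hW]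
      have h1 := LinearMap.finrank_range_add_finrank_ker (g i)
      rw [LinearMap.range_eq_top.mpr (hsurj i), finrank_top] at h1
      have hd1 := hdim i.castSucc
      have hd2 := hdim i.succ
      simp only [Fin.coe_castSucc, Fin.val_succ] at hd1 hd2
      have hj : ν - i.val - 1 < ν := by omega
      have := he _ hj
      have e2 : ν - i.val - 1 + 1 = ν - i.val := by omega
      have e3 : ν - (i.val + 1) = ν - i.val - 1 := by omega
      rw [e2] at this
      rw [e3] at hd2
      omega
    set C : Fin (ν + 1) → Type _ := fun i => {W : Submodule k (X i) // finrank k W = r i.val}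
      with hC
    set Ulast : C (Fin.last ν) := ⟨Classical.choose hlast, by
      have := (Classical.choose_spec hlast).2
      simpa using this⟩ with hUlast
    set step : ∀ i : Fin ν, C i.succ → C i.castSucc := fun i W =>
      ⟨Classical.choose (hex i W.1 W.2), by
        have := (Classical.choose_spec (hex i W.1 W.2)).2
        simpa using this⟩ with hstep
    set UU : ∀ i : Fin (ν + 1), C i := Fin.reverseInduction Ulast step with hUU
    refine ⟨fun i => (UU i).1, ?_, fun i => (UU i).2⟩
    intro i x hx
    have hx' : x ∈ (UU i.castSucc).1 := hx
    have hrec : UU i.castSucc = step i (UU i.succ) := Fin.reverseInduction_castSucc i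
    rw [hrec] at hx'
    have hle := (Classical.choose_spec (hex i (UU i.succ).1 (UU i.succ).2)).1
    exact hle hx'
end

section
/- Let k = 𝔽_q, ν ≥ 0, and 𝐞 = (e⁰, …, e^ν), 𝐫 = (r⁰, …, r^ν) sequences of non-negative integers with 𝐞 weakly increasing. Then the number of subrepresentations of dimension vector 𝐫 of X^{𝐫,𝐞} (the A_{ν+1}-representation with X^i = k^{e^{ν−i}+r^i} and surjective maps) equals Π_{i=0}^{ν} [e^{ν−i} − e^{ν−i−1} + r^i choose r^i]_q, the product of Gaussian binomial coefficients (with e^{−1} := 0). In particular this count is congruent to 1 modulo q whenever it is nonzero. -/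
open Module Finset

/-- The `q`-integer `[n]_q = 1 + q + ⋯ + q^{n-1}`. -/
def qInt (q n : ℕ) : ℕ := ∑ i ∈ range n, q ^ i

/-- The `q`-factorial `[n]_q!`. -/
def qFact (q n : ℕ) : ℕ := ∏ i ∈ range n, qInt q (i + 1)

/-- The Gaussian binomial coefficient `[n choose r]_q` (the division is exact). -/
def qBinom (q n r : ℕ) : ℕ := qFact q n / (qFact q r * qFact q (n - r))

lemma qInt_pos (q m : ℕ) : 0 < qInt q (m + 1) := by
  have : q ^ 0 ≤ ∑ i ∈ range (m+1), q ^ i :=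
    Finset.single_le_sum (fun i _ => Nat.zero_le _) (mem_range.2 (Nat.succ_pos m))
  exact Nat.lt_of_lt_of_le (by simp) this

lemma qFact_pos (q n : ℕ) : 0 < qFact q n :=
  Finset.prod_pos fun i _ => qInt_pos q i

lemma qInt_mul (q m : ℕ) (hq : 1 ≤ q) : (q - 1) * qInt q m + 1 = q ^ m := by
  induction m with
  | zero => simp [qInt]
  | succ m ih =>
    have h1 : qInt q (m+1) = qInt q m + q ^ m := by simp [qInt, Finset.sum_range_succ]
    have h2 : (q - 1) * q ^ m + q ^ m = q * q ^ m := by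
      cases q with
      | zero => exact absurd hq (by norm_num)
      | succ q' => simp [Nat.succ_sub_one, Nat.succ_mul]
    have h3 : q ^ (m + 1) = q ^ m * q := pow_succ q m
    have h4 : q ^ m * q = q * q ^ m := mul_comm _ _
    rw [h1, Nat.mul_add, h3]
    omega

lemma pow_sub_pow' (q n i : ℕ) (hq : 1 ≤ q) (hi : i ≤ n) :
    q ^ n - q ^ i = q ^ i * ((q - 1) * qInt q (n - i)) := by
  have h1 := qInt_mul q (n - i) hq
  have h2 : q ^ i * ((q-1) * qInt q (n-i) + 1) = q ^ i * q ^ (n-i) := by rw [h1]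
  rw [Nat.mul_add, mul_one, ← pow_add, Nat.add_sub_cancel' hi] at h2
  omega

lemma prod_pow_sub (q n r : ℕ) (hq : 1 ≤ q) (hr : r ≤ n) :
    ∏ i ∈ range r, (q ^ n - q ^ i)
      = (∏ i ∈ range r, q ^ i) * ((q - 1) ^ r * ∏ i ∈ range r, qInt q (n - i)) := by
  rw [show ((q-1)^r : ℕ) = ∏ _i ∈ range r, (q-1) by simp, ← Finset.prod_mul_distrib,
    ← Finset.prod_mul_distrib]
  exact Finset.prod_congr rfl fun i hi =>
    pow_sub_pow' q n i hq (le_trans (le_of_lt (mem_range.1 hi)) hr) |>.trans (by ring)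

lemma prod_qInt_desc (q n r : ℕ) (hr : r ≤ n) :
    qFact q (n - r) * ∏ i ∈ range r, qInt q (n - i) = qFact q n := by
  have h := Finset.prod_range_add (fun j => qInt q (j+1)) (n-r) r
  rw [Nat.sub_add_cancel hr] at h
  simp only [qFact]
  rw [h]
  congr 1
  rw [← Finset.prod_range_reflect (fun j => qInt q (n - j)) r]
  apply Finset.prod_congr rfl
  intro j hj
  have := mem_range.1 hj
  congr 1
  omega

section Grass
variable {K V : Type*} [Field K] [Fintype K] [AddCommGroup V] [Module K V]
  [FiniteDimensional K V]

/-- independent families spanning `U` ≃ independent families in `U`. -/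
noncomputable def fiberEquiv (r : ℕ) (U : {U : Submodule K V // finrank K U = r}) :
    {s : {s : Fin r → V // LinearIndependent K s} //
        Submodule.span K (Set.range s.1) = U.1} ≃
      {t : Fin r → U.1 // LinearIndependent K t} where
  toFun s := ⟨fun i => ⟨s.1.1 i, by
      exact s.2.le (Submodule.subset_span (Set.mem_range_self i))⟩,
    LinearIndependent.of_comp U.1.subtype s.1.2⟩
  invFun t := ⟨⟨fun i => (t.1 i : V), t.2.map' U.1.subtype (Submodule.ker_subtype _)⟩, by
    have hspan : Submodule.span K (Set.range t.1) = ⊤ := by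
      rcases Nat.eq_zero_or_pos r with hr | hr
      · subst hr
        haveI : Subsingleton U.1 := finrank_zero_iff.mp U.2
        rw [Submodule.eq_top_iff']
        intro x
        rw [Subsingleton.elim x 0]
        exact zero_mem _
      · haveI : Nonempty (Fin r) := ⟨⟨0, hr⟩⟩
        exact t.2.span_eq_top_of_card_eq_finrank (by simp [U.2])
    have hr : Set.range (fun i => (t.1 i : V)) = U.1.subtype '' Set.range t.1 := by
      rw [← Set.range_comp]; rfl
    rw [hr, ← Submodule.map_span, hspan, Submodule.map_subtype_top]⟩
  left_inv s := Subtype.ext (Subtype.ext rfl)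
  right_inv t := Subtype.ext rfl

variable (K V) in
lemma card_grass (r : ℕ) (hr : r ≤ finrank K V) :
    Nat.card {U : Submodule K V // finrank K U = r} *
      ∏ i ∈ range r, (Fintype.card K ^ r - Fintype.card K ^ i)
    = ∏ i ∈ range r, (Fintype.card K ^ finrank K V - Fintype.card K ^ i) := by
  haveI : Finite V := Module.finite_of_finite K
  haveI : Finite (Submodule K V) := Finite.of_injective _ SetLike.coe_injective
  classical
  haveI : Fintype {U : Submodule K V // finrank K U = r} := Fintype.ofFinite _
  haveI : Fintype {s : Fin r → V // LinearIndependent K s} := Fintype.ofFinite _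
  -- span map
  set f : {s : Fin r → V // LinearIndependent K s} → {U : Submodule K V // finrank K U = r} :=
    fun s => ⟨Submodule.span K (Set.range s.1), by
      rw [finrank_span_eq_card s.2]; simp⟩ with hf
  have key : Nat.card {s : Fin r → V // LinearIndependent K s}
      = ∑ U : {U : Submodule K V // finrank K U = r},
          Nat.card {t : Fin r → U.1 // LinearIndependent K t} := by
    rw [← Nat.card_congr (Equiv.sigmaFiberEquiv f)]
    rw [Nat.card_eq_fintype_card, Fintype.card_sigma]
    apply Finset.sum_congr rfl
    intro U _
    have e2 : {s // f s = U} ≃ {s : {s : Fin r → V // LinearIndependent K s} //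
        Submodule.span K (Set.range s.1) = U.1} :=
      Equiv.subtypeEquivRight fun s => by
        constructor
        · intro h; rw [← h]
        · intro h; exact Subtype.ext h
    rw [← Nat.card_eq_fintype_card, Nat.card_congr (e2.trans (fiberEquiv r U))]
  rw [card_linearIndependent hr] at key
  have inner : ∀ U : {U : Submodule K V // finrank K U = r},
      Nat.card {t : Fin r → U.1 // LinearIndependent K t}
        = ∏ i ∈ range r, (Fintype.card K ^ r - Fintype.card K ^ i) := by
    intro U
    haveI : Finite U.1 := Module.finite_of_finite K
    rw [card_linearIndependent (le_of_eq U.2.symm), U.2,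
      Fin.prod_univ_eq_prod_range (fun j => Fintype.card K ^ r - Fintype.card K ^ j)]
  rw [Finset.sum_congr rfl (fun U _ => inner U), Finset.sum_const, smul_eq_mul,
    Finset.card_univ] at key
  rw [Nat.card_eq_fintype_card (α := {U : Submodule K V // finrank K U = r}), ← key, Fin.prod_univ_eq_prod_range
    (fun j => Fintype.card K ^ finrank K V - Fintype.card K ^ j)]

end Grass

section Grass2
variable (K : Type*) [Field K] [Fintype K]

lemma qFact_identity (V : Type*) [AddCommGroup V] [Module K V] [FiniteDimensional K V]
    (r : ℕ) (hr : r ≤ finrank K V) :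
    Nat.card {U : Submodule K V // finrank K U = r} *
      (qFact (Fintype.card K) r * qFact (Fintype.card K) (finrank K V - r))
    = qFact (Fintype.card K) (finrank K V) := by
  set q := Fintype.card K with hq
  set n := finrank K V with hn
  set N := Nat.card {U : Submodule K V // finrank K U = r} with hN
  have hq2 : 1 < q := Fintype.one_lt_card
  have hq1 : 1 ≤ q := le_of_lt hq2
  have key := card_grass K V r hr
  rw [← hq, ← hn, ← hN] at key
  have hPr : ∏ i ∈ range r, (q^r - q^i)
      = (∏ i ∈ range r, q^i) * ((q-1)^r * qFact q r) := by
    rw [prod_pow_sub q r r hq1 le_rfl]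
    have h0 := prod_qInt_desc q r r le_rfl
    rw [Nat.sub_self] at h0
    simp only [qFact, range_zero, Finset.prod_empty, one_mul] at h0
    rw [h0]
    rfl
  have hPn := prod_pow_sub q n r hq1 hr
  have h3 := prod_qInt_desc q n r hr
  have Cpos : 0 < (∏ i ∈ range r, q^i) * (q-1)^r := by
    apply Nat.mul_pos
    · exact Finset.prod_pos fun i _ => pow_pos (by omega) i
    · exact pow_pos (by omega) r
  have key2 : N * (qFact q r * qFact q (n - r)) * ((∏ i ∈ range r, q^i) * (q-1)^r)
      = qFact q n * ((∏ i ∈ range r, q^i) * (q-1)^r) := by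
    calc N * (qFact q r * qFact q (n - r)) * ((∏ i ∈ range r, q^i) * (q-1)^r)
        = (N * ∏ i ∈ range r, (q^r - q^i)) * qFact q (n-r) := by rw [hPr]; ring
      _ = (∏ i ∈ range r, (q^n - q^i)) * qFact q (n-r) := by rw [key]
      _ = qFact q n * ((∏ i ∈ range r, q^i) * (q-1)^r) := by rw [hPn, ← h3]; ring
  exact Nat.eq_of_mul_eq_mul_right Cpos key2

lemma card_grass_qBinom (V : Type*) [AddCommGroup V] [Module K V] [FiniteDimensional K V]
    (r : ℕ) (hr : r ≤ finrank K V) :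
    Nat.card {U : Submodule K V // finrank K U = r}
      = qBinom (Fintype.card K) (finrank K V) r := by
  have h := qFact_identity K V r hr
  have hpos : 0 < qFact (Fintype.card K) r * qFact (Fintype.card K) (finrank K V - r) :=
    Nat.mul_pos (qFact_pos _ _) (qFact_pos _ _)
  rw [qBinom, ← h, Nat.mul_div_cancel _ hpos]

lemma qBinom_mul (n r : ℕ) (hr : r ≤ n) :
    qBinom (Fintype.card K) n r * (qFact (Fintype.card K) r * qFact (Fintype.card K) (n - r))
      = qFact (Fintype.card K) n := by
  have hn : finrank K (Fin n → K) = n := by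
    rw [Module.finrank_fintype_fun_eq_card, Fintype.card_fin]
  have h := qFact_identity K (Fin n → K) r (by rw [hn]; exact hr)
  rw [card_grass_qBinom K (Fin n → K) r (by rw [hn]; exact hr), hn] at h
  exact h

end Grass2

lemma qInt_modq (q m : ℕ) : qInt q (m + 1) ≡ 1 [MOD q] := by
  induction m with
  | zero => simp [qInt, Nat.ModEq.refl]
  | succ m ih =>
    have h1 : qInt q (m+2) = qInt q (m+1) + q ^ (m+1) := by
      simp [qInt, Finset.sum_range_succ]
    rw [h1]
    have h2 : q ^ (m+1) ≡ 0 [MOD q] :=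
      (Nat.modEq_zero_iff_dvd).2 (dvd_pow_self q (Nat.succ_ne_zero m))
    simpa using ih.add h2

lemma qFact_modq (q n : ℕ) : qFact q n ≡ 1 [MOD q] := by
  induction n with
  | zero => simp [qFact, Nat.ModEq.refl]
  | succ n ih =>
    have h1 : qFact q (n+1) = qFact q n * qInt q (n+1) := Finset.prod_range_succ _ n
    rw [h1]
    simpa using ih.mul (qInt_modq q n)

lemma qBinom_modq (K : Type*) [Field K] [Fintype K] (n r : ℕ) (hr : r ≤ n) :
    qBinom (Fintype.card K) n r ≡ 1 [MOD Fintype.card K] := by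
  set q := Fintype.card K
  calc qBinom q n r ≡ qBinom q n r * (qFact q r * qFact q (n - r)) [MOD q] := by
        have := ((qFact_modq q r).mul (qFact_modq q (n-r))).symm
        simpa using (Nat.ModEq.mul_left (qBinom q n r) this)
    _ = qFact q n := qBinom_mul K n r hr
    _ ≡ 1 [MOD q] := qFact_modq q n

universe u v

set_option maxHeartbeats 1000000 in
theorem aux (k : Type v) [Field k] [Fintype k] (ν : ℕ) :
    ∀ (e r : ℕ → ℕ), (∀ i < ν, e i ≤ e (i + 1)) →
    ∀ (X : Fin (ν + 1) → Type u) [∀ i, AddCommGroup (X i)] [∀ i, Module k (X i)]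
      [∀ i, FiniteDimensional k (X i)],
    (∀ i : Fin (ν + 1), finrank k (X i) = e (ν - i.val) + r i.val) →
    ∀ (g : ∀ i : Fin ν, X i.castSucc →ₗ[k] X i.succ), (∀ i, Function.Surjective (g i)) →
    Nat.card {U : ∀ i : Fin (ν + 1), Submodule k (X i) //
        (∀ i : Fin ν, ∀ x ∈ U i.castSucc, g i x ∈ U i.succ) ∧
        (∀ i : Fin (ν + 1), finrank k (U i) = r i.val)}
      = ∏ i ∈ range (ν + 1),
          qBinom (Fintype.card k) (e (ν - i) - (if i < ν then e (ν - i - 1) else 0) + r i)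
            (r i) := by
  induction ν with
  | zero =>
    intro e r he X _ _ _ hdim g hsurj
    have E : {U : ∀ i : Fin 1, Submodule k (X i) //
        (∀ i : Fin 0, ∀ x ∈ U i.castSucc, g i x ∈ U i.succ) ∧
        (∀ i : Fin 1, finrank k (U i) = r i.val)}
        ≃ {U0 : Submodule k (X 0) // finrank k U0 = r 0} :=
      { toFun := fun U => ⟨U.1 0, U.2.2 0⟩
        invFun := fun U0 => ⟨fun i => Fin.cases U0.1 (fun j => j.elim0) i,
          fun i => i.elim0, fun i => Fin.cases (by convert U0.2 <;> rfl) (fun j => j.elim0) i⟩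
        left_inv := fun U => by
          apply Subtype.ext; funext i
          refine Fin.cases ?_ (fun j => j.elim0) i
          simp
        right_inv := fun U0 => Subtype.ext (by simp) }
    rw [Nat.card_congr E, card_grass_qBinom k (X 0) (r 0)
      (by rw [hdim 0]; exact Nat.le_add_left _ _)]
    rw [hdim 0]
    simp
  | succ ν ih =>
    intro e r he X _ _ _ hdim g hsurj
    haveI : ∀ i, Finite (X i) := fun i => Module.finite_of_finite k
    haveI : ∀ i, Finite (Submodule k (X i)) :=
      fun i => Finite.of_injective _ SetLike.coe_injective
    classical
    set S := {U : ∀ i : Fin (ν + 2), Submodule k (X i) //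
        (∀ i : Fin (ν + 1), ∀ x ∈ U i.castSucc, g i x ∈ U i.succ) ∧
        (∀ i : Fin (ν + 2), finrank k (U i) = r i.val)} with hS
    set T := {U : ∀ j : Fin (ν + 1), Submodule k (X j.succ) //
        (∀ i : Fin ν, ∀ x ∈ U i.castSucc, g i.succ x ∈ U i.succ) ∧
        (∀ j : Fin (ν + 1), finrank k (U j) = r (j.val + 1))} with hT
    haveI : Fintype S := Fintype.ofFinite _
    haveI : Fintype T := Fintype.ofFinite _
    -- the tail map
    set f : S → T := fun U => ⟨fun j => U.1 j.succ, fun i => U.2.1 i.succ,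
      fun j => U.2.2 j.succ⟩ with hf
    -- cardinality of each fiber
    have fibcard : ∀ T0 : T, Nat.card {U : S // f U = T0}
        = qBinom (Fintype.card k) (e (ν + 1) - e ν + r 0) (r 0) := by
      intro T0
      set W : Submodule k (X ((0 : Fin (ν + 1)).castSucc)) := Submodule.comap (g 0) (T0.1 0) with hW
      have hkerW : LinearMap.ker (g 0) ≤ W := by
        intro x hx
        simp only [hW, Submodule.mem_comap]
        have h0 : g 0 x = 0 := LinearMap.mem_ker.1 hx; show g 0 x ∈ T0.1 0; rw [h0]
        exact zero_mem _
      have hrankW : finrank k W = e (ν + 1) - e ν + r 0 := by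
        have h1 := LinearMap.finrank_range_add_finrank_ker ((g 0).domRestrict W)
        have h2 : LinearMap.range ((g 0).domRestrict W) = T0.1 0 := by
          rw [LinearMap.range_domRestrict, hW, Submodule.map_comap_eq,
            LinearMap.range_eq_top.2 (hsurj 0), top_inf_eq]
        have h3 : finrank k (LinearMap.ker ((g 0).domRestrict W))
            = finrank k (LinearMap.ker (g 0)) := by
          rw [LinearMap.ker_domRestrict]
          exact LinearEquiv.finrank_eq (Submodule.comapSubtypeEquivOfLe hkerW)
        have h4 := LinearMap.finrank_range_add_finrank_ker (g 0)
        rw [LinearMap.range_eq_top.2 (hsurj 0), finrank_top] at h4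
        have h5 : finrank k (X ((0 : Fin (ν + 1)).castSucc)) = e (ν + 1) + r 0 := by
          simpa only [Fin.castSucc_zero, Fin.val_zero, Nat.sub_zero]
            using hdim ((0 : Fin (ν + 1)).castSucc)
        have h6 : finrank k (X ((0 : Fin (ν + 1)).succ)) = e ν + r 1 := by
          simpa only [Fin.val_succ, Fin.val_zero, Nat.zero_add, Nat.add_sub_cancel]
            using hdim ((0 : Fin (ν + 1)).succ)
        have h7 : finrank k (T0.1 0) = r 1 := T0.2.2 0
        have h8 : e ν ≤ e (ν + 1) := he ν (Nat.lt_succ_self ν)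
        rw [h2, h3, h7] at h1
        rw [h6, h5] at h4
        have h1' : r 1 + finrank k (LinearMap.ker (g 0)) = finrank k W := h1
        have h4' : e ν + r 1 + finrank k (LinearMap.ker (g 0)) = e (ν + 1) + r 0 := by
          omega
        omega
      -- fiber ≃ subspaces of X 0 inside W ≃ subspaces of W
      have EA : {U : S // f U = T0} ≃
          {p : Submodule k (X ((0 : Fin (ν + 1)).castSucc)) // p ≤ W ∧ finrank k p = r 0} :=
      { toFun := fun U => ⟨U.1.1 0, by
          obtain ⟨V, hV⟩ := U
          rw [hf] at hV
          constructor
          · intro x hx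
            have h1 := V.2.1 0 x hx
            have h2 : V.1 ((0 : Fin (ν + 1)).succ) = T0.1 0 :=
              congrFun (congrArg Subtype.val hV) 0
            exact (h2 ▸ h1 : g 0 x ∈ T0.1 0)
          · exact V.2.2 0⟩
        invFun := fun p => ⟨⟨fun i => Fin.cases p.1 T0.1 i, by
            intro i
            refine Fin.cases ?_ ?_ i
            · intro x hx
              exact p.2.1 hx
            · intro j x hx
              exact T0.2.1 j x hx,
          by
            intro i
            refine Fin.cases ?_ ?_ i
            · exact p.2.2
            · intro j
              exact T0.2.2 j⟩,
          by rw [hf]; exact Subtype.ext (funext fun j => rfl)⟩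
        left_inv := fun U => by
          obtain ⟨V, hV⟩ := U
          have hV' := hV
          rw [hf] at hV'
          apply Subtype.ext; apply Subtype.ext; funext i
          refine Fin.cases ?_ ?_ i
          · simp
          · intro j
            exact (congrFun (congrArg Subtype.val hV') j).symm
        right_inv := fun p => Subtype.ext (by simp; rfl) }
      have EB : {p : Submodule k (X ((0 : Fin (ν + 1)).castSucc)) // p ≤ W ∧ finrank k p = r 0} ≃
          {U0 : Submodule k W // finrank k U0 = r 0} :=
      { toFun := fun p => ⟨Submodule.comap W.subtype p.1, by
          rw [LinearEquiv.finrank_eq (Submodule.comapSubtypeEquivOfLe p.2.1)]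
          exact p.2.2⟩
        invFun := fun u => ⟨Submodule.map W.subtype u.1,
          ⟨Submodule.map_subtype_le W u.1, by
            rw [Submodule.finrank_map_subtype_eq]; exact u.2⟩⟩
        left_inv := fun p => Subtype.ext (by
          show Submodule.map W.subtype (Submodule.comap W.subtype p.1) = p.1
          rw [Submodule.map_comap_subtype]
          exact inf_eq_right.2 p.2.1)
        right_inv := fun u => Subtype.ext (by
          show Submodule.comap W.subtype (Submodule.map W.subtype u.1) = u.1
          rw [Submodule.comap_map_eq, Submodule.ker_subtype, sup_bot_eq]) }
      rw [Nat.card_congr (EA.trans EB),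
        card_grass_qBinom k W (r 0) (by rw [hrankW]; exact Nat.le_add_left _ _), hrankW]
    -- total count
    have key : Nat.card S = Nat.card T *
        qBinom (Fintype.card k) (e (ν + 1) - e ν + r 0) (r 0) := by
      rw [← Nat.card_congr (Equiv.sigmaFiberEquiv f), Nat.card_eq_fintype_card,
        Fintype.card_sigma]
      rw [Finset.sum_congr rfl (fun T0 _ => (Nat.card_eq_fintype_card).symm.trans
        (fibcard T0)), Finset.sum_const, smul_eq_mul, Finset.card_univ,
        Nat.card_eq_fintype_card]
    have hTT : Nat.card T = ∏ i ∈ range (ν + 1), qBinom (Fintype.card k)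
        (e (ν - i) - (if i < ν then e (ν - i - 1) else 0) + r (i + 1)) (r (i + 1)) :=
      ih e (fun m => r (m + 1)) (fun i hi => he i (Nat.lt_succ_of_lt hi))
        (fun j : Fin (ν + 1) => X j.succ)
        (fun j => by simpa [Nat.succ_sub_succ] using hdim j.succ)
        (fun i : Fin ν => g i.succ) (fun i => hsurj i.succ)
    rw [key, hTT,
      Finset.prod_range_succ' (fun i => qBinom (Fintype.card k)
        (e (ν + 1 - i) - (if i < ν + 1 then e (ν + 1 - i - 1) else 0) + r i) (r i)) (ν + 1)]
    congr 1
    · apply Finset.prod_congr rfl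
      intro i _
      simp [Nat.succ_sub_succ]

lemma prod_modq (q : ℕ) (s : Finset ℕ) (F : ℕ → ℕ) (h : ∀ i ∈ s, F i ≡ 1 [MOD q]) :
    (∏ i ∈ s, F i) ≡ 1 [MOD q] :=
  Finset.prod_induction F (fun x => x ≡ 1 [MOD q])
    (fun a b ha hb => by simpa using ha.mul hb) (Nat.ModEq.refl 1) h

/-- Let `k = 𝔽_q` and let `𝐞`, `𝐫` be sequences of non-negative integers with
`𝐞` weakly increasing.  Then the number of subrepresentations of dimension vector `𝐫` of the
`A_{ν+1}`-representation `X^{𝐫,𝐞}` (with `X^i = k^{e^{ν−i}+r^i}` and surjective maps) equals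
`∏_{i=0}^{ν} [e^{ν−i} − e^{ν−i−1} + r^i choose r^i]_q` (with `e^{−1} := 0`); in particular this
count is congruent to `1` modulo `q`. -/
theorem card_subreps_of_injective_Arep
    (k : Type*) [Field k] [Fintype k] (q : ℕ) (hq : q = Fintype.card k)
    (ν : ℕ) (e r : ℕ → ℕ) (he : ∀ i < ν, e i ≤ e (i + 1))
    (X : Fin (ν + 1) → Type*) [∀ i, AddCommGroup (X i)] [∀ i, Module k (X i)]
    [∀ i, FiniteDimensional k (X i)]
    (hdim : ∀ i : Fin (ν + 1), finrank k (X i) = e (ν - i.val) + r i.val)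
    (g : ∀ i : Fin ν, X i.castSucc →ₗ[k] X i.succ)
    (hsurj : ∀ i, Function.Surjective (g i)) :
    Nat.card {U : ∀ i : Fin (ν + 1), Submodule k (X i) //
        (∀ i : Fin ν, ∀ x ∈ U i.castSucc, g i x ∈ U i.succ) ∧
        (∀ i : Fin (ν + 1), finrank k (U i) = r i.val)}
      = ∏ i ∈ range (ν + 1),
          qBinom q (e (ν - i) - (if i < ν then e (ν - i - 1) else 0) + r i) (r i) ∧
    Nat.card {U : ∀ i : Fin (ν + 1), Submodule k (X i) //
        (∀ i : Fin ν, ∀ x ∈ U i.castSucc, g i x ∈ U i.succ) ∧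
        (∀ i : Fin (ν + 1), finrank k (U i) = r i.val)} % q = 1 := by
  subst hq
  have main := aux k ν e r he X hdim g hsurj
  refine ⟨main, ?_⟩
  rw [main]
  have hmod : (∏ i ∈ range (ν + 1), qBinom (Fintype.card k)
      (e (ν - i) - (if i < ν then e (ν - i - 1) else 0) + r i) (r i))
      ≡ 1 [MOD Fintype.card k] := by
    apply prod_modq
    intro i _
    exact qBinom_modq k _ _ (Nat.le_add_left _ _)
  have h2 : (1 : ℕ) < Fintype.card k := Fintype.one_lt_card
  calc (∏ i ∈ range (ν + 1), qBinom (Fintype.card k)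
        (e (ν - i) - (if i < ν then e (ν - i - 1) else 0) + r i) (r i)) % Fintype.card k
      = 1 % Fintype.card k := hmod
    _ = 1 := Nat.mod_eq_of_lt h2
end
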